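/- For the closed model with K = 1, the radial function R_{ωℓ}(χ) = sqrt(π M_{ωℓ} / (2(ω+1)² sin χ)) P^{-1/2-ℓ}_{1/2+ω}(cos χ), where M_{ωℓ} = Π_{n=0}^{ℓ} ((ω+1)² − n²), solves the radial equation (1/sin²χ) d/dχ (sin²χ dR/dχ) + [(ω+1)² − 1 − ℓ(ℓ+1)/sin²χ] R = 0 on (0, π). -/

import Mathlib

open scoped Real

/-- Gauss hypergeometric series ₂F₁(a,b;c;x), real parameters. -/
noncomputable def hyp2F1 (a b c x : ℝ) : ℝ :=
  ∑' n : ℕ, ((ascPochhammer ℝ n).eval a * (ascPochhammer ℝ n).eval b) /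
    ((ascPochhammer ℝ n).eval c * (n.factorial : ℝ)) * x ^ n

/-- Ferrers function (associated Legendre function of the first kind) on `(-1, 1)`. -/
noncomputable def legendreP (μ ν x : ℝ) : ℝ :=
  (1 / Real.Gamma (1 - μ)) * ((1 + x) / (1 - x)) ^ (μ / 2) *
    hyp2F1 (-ν) (ν + 1) (1 - μ) ((1 - x) / 2)

/-- `M_{ωℓ} = ∏_{n=0}^{ℓ} ((ω+1)² − n²)`. -/
noncomputable def Mcoef (ω ℓ : ℕ) : ℝ :=
  ∏ n ∈ Finset.range (ℓ + 1), (((ω : ℝ) + 1) ^ 2 - (n : ℝ) ^ 2)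

/-- The radial function of the closed model `K = 1`,
`R_{ωℓ}(χ) = √(π M_{ωℓ}/(2(ω+1)² sin χ)) P^{-1/2-ℓ}_{1/2+ω}(cos χ)`. -/
noncomputable def Rclosed (ω ℓ : ℕ) (χ : ℝ) : ℝ :=
  Real.sqrt (π * Mcoef ω ℓ / (2 * ((ω : ℝ) + 1) ^ 2 * Real.sin χ)) *
    legendreP (-(1 / 2) - ℓ) (1 / 2 + ω) (Real.cos χ)

/-!
Put `u = (1 - cos χ) / 2` and `G(χ) = ((1 + cos χ) / (1 - cos χ))^(μ/2) / √(sin χ)`, so that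
`P^μ_ν(cos χ) / √(sin χ) = Γ(1 - μ)⁻¹ G(χ) ₂F₁(-ν, ν + 1; 1 - μ; u)` and
`G'/G = -(cos χ + 2μ) / (2 sin χ)`. Differentiating the power series termwise, `₂F₁(a, b; c; ·)`
solves the hypergeometric equation on `(-1, 1)`: the equation amounts to the recurrence
`(n + 1)(n + c) pₙ₊₁ = (n + a)(n + b) pₙ` of its coefficients. The radial operator with
`k² - K = (ν + 1/2)² - 1` and `ℓ(ℓ + 1) = μ² - 1/4`, applied to `G · F(u)`, is `G` times the
hypergeometric operator applied to `F` at `u`; the closed model is `μ = -1/2 - ℓ`, `ν = 1/2 + ω`.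
-/

open Filter Topology FormalMultilinearSeries
open scoped NNReal ENNReal

def derivCoeff (a : ℕ → ℝ) (n : ℕ) : ℝ := (n + 1) * a (n + 1)

section PowerSeries

variable {a : ℕ → ℝ} {t : ℝ}

lemma summable_norm_derivCoeff_mul_pow {r : ℝ≥0} (hr : (r : ℝ≥0∞) < (ofScalars ℝ a).radius) :
    Summable fun n => ‖derivCoeff a n‖ * (r : ℝ) ^ n := by
  obtain ⟨r', hrr', hr'⟩ := ENNReal.lt_iff_exists_nnreal_btwn.mp hr
  obtain ⟨C, -, hC⟩ := (ofScalars ℝ a).norm_mul_pow_le_of_lt_radius hr'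
  have hr'0 : (0 : ℝ) < r' := lt_of_le_of_lt r.2 (by exact_mod_cast hrr')
  have hq : ‖(r : ℝ) / r'‖ < 1 := by
    rw [Real.norm_of_nonneg (by positivity), div_lt_one hr'0]
    exact_mod_cast hrr'
  have hgeom := ((summable_pow_mul_geometric_of_norm_lt_one 1 hq).add
    (summable_geometric_of_norm_lt_one hq)).mul_left (C / r')
  refine .of_nonneg_of_le (fun _ ↦ by positivity) (fun n ↦ ?_) hgeom
  have hbound := hC (n + 1)
  rw [ofScalars_norm] at hbound
  calc ‖derivCoeff a n‖ * (r : ℝ) ^ n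
      = (n + 1) * ((r : ℝ) / r') ^ n / r' * (‖a (n + 1)‖ * (r' : ℝ) ^ (n + 1)) := by
        rw [derivCoeff, norm_mul, Real.norm_of_nonneg (by positivity), div_pow, pow_succ]
        field_simp
    _ ≤ (n + 1) * ((r : ℝ) / r') ^ n / r' * C := by gcongr
    _ = C / r' * ((n : ℝ) ^ 1 * ((r : ℝ) / r') ^ n + ((r : ℝ) / r') ^ n) := by ring

lemma radius_le_radius_derivCoeff :
    (ofScalars ℝ a).radius ≤ (ofScalars ℝ (derivCoeff a)).radius :=
  ENNReal.le_of_forall_nnreal_lt fun _ hr ↦ le_radius_of_summable_norm _ <| by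
    simpa [ofScalars_norm] using summable_norm_derivCoeff_mul_pow hr

lemma eball_subset_eball_derivCoeff :
    Metric.eball (0 : ℝ) (ofScalars ℝ a).radius ⊆
      Metric.eball 0 (ofScalars ℝ (derivCoeff a)).radius :=
  Metric.eball_subset_eball radius_le_radius_derivCoeff

lemma summable_mul_pow (ht : t ∈ Metric.eball 0 (ofScalars ℝ a).radius) :
    Summable fun n => a n * t ^ n :=
  .of_norm (by simpa [ofScalars_norm, norm_pow] using
    (ofScalars ℝ a).summable_norm_mul_pow (mem_eball_zero_iff.mp ht))

lemma hasSum_ofScalarsSum (ht : t ∈ Metric.eball 0 (ofScalars ℝ a).radius) :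
    HasSum (fun n => a n * t ^ n) (ofScalarsSum a t) := by
  simpa [ofScalars_sum_eq] using (summable_mul_pow ht).hasSum

lemma hasDerivAt_ofScalarsSum (ht : t ∈ Metric.eball 0 (ofScalars ℝ a).radius) :
    HasDerivAt (ofScalarsSum a) (ofScalarsSum (derivCoeff a) t) t := by
  obtain ⟨r, htr, hr⟩ := ENNReal.lt_iff_exists_nnreal_btwn.mp (mem_eball_zero_iff.mp ht)
  have htr' : t ∈ Metric.ball 0 (r : ℝ) := mem_ball_zero_iff.mpr (by exact_mod_cast htr)
  have hu : Summable fun n => ‖a n‖ * n * (r : ℝ) ^ (n - 1) :=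
    (summable_nat_add_iff 1).mp <| (summable_norm_derivCoeff_mul_pow hr).congr fun n ↦ by
      rw [derivCoeff, norm_mul, Real.norm_of_nonneg (by positivity)]
      push_cast
      ring_nf
  have hbound : ∀ n, ∀ y ∈ Metric.ball (0 : ℝ) r,
      ‖a n * (n * y ^ (n - 1))‖ ≤ ‖a n‖ * n * (r : ℝ) ^ (n - 1) := fun n y hy ↦ by
    rw [mem_ball_zero_iff] at hy
    rw [norm_mul, norm_mul, norm_pow, Real.norm_natCast, ← mul_assoc]
    gcongr
  have hderiv := hasDerivAt_tsum_of_isPreconnected hu Metric.isOpen_ball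
    (convex_ball (0 : ℝ) r).isPreconnected (fun n y _ ↦ (hasDerivAt_pow n y).const_mul (a n))
    hbound htr' (summable_mul_pow ht) htr'
  have hshift : ∑' n, a n * (n * t ^ (n - 1)) = ∑' n, derivCoeff a n * t ^ n := by
    have hs := summable_mul_pow (eball_subset_eball_derivCoeff ht)
    rw [tsum_eq_zero_add' (by simpa [derivCoeff, mul_assoc, mul_left_comm] using hs)]
    simp [derivCoeff, mul_assoc, mul_left_comm]
  rw [ofScalarsSum_eq_tsum, ofScalarsSum_eq_tsum]
  simpa only [smul_eq_mul, hshift] using hderiv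

lemma hasDerivAt_deriv_ofScalarsSum (ht : t ∈ Metric.eball 0 (ofScalars ℝ a).radius) :
    HasDerivAt (deriv (ofScalarsSum a)) (ofScalarsSum (derivCoeff (derivCoeff a)) t) t := by
  have hderiv : deriv (ofScalarsSum a) =ᶠ[𝓝 t] ofScalarsSum (derivCoeff a) :=
    eventually_of_mem (Metric.isOpen_eball.mem_nhds ht) fun _ hy ↦
      (hasDerivAt_ofScalarsSum hy).deriv
  exact (hasDerivAt_ofScalarsSum (eball_subset_eball_derivCoeff ht)).congr_of_eventuallyEq hderiv

lemma hasSum_mul_pow_of_succ {g : ℕ → ℝ} {s : ℝ} (hg : g 0 = 0)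
    (h : HasSum (fun n => g (n + 1) * t ^ n) s) : HasSum (fun n => g n * t ^ n) (t * s) :=
  (hasSum_nat_add_iff' 1).mp <| by
    simpa [hg, pow_succ, mul_comm, mul_left_comm, mul_assoc] using h.mul_left t

end PowerSeries

theorem ordinaryHypergeometricCoefficient_succ {𝕂 : Type*} [Field 𝕂] [CharZero 𝕂] {a b c : 𝕂}
    (hc : ∀ k : ℕ, (k : 𝕂) ≠ -c) (n : ℕ) :
    (n + 1) * (c + n) * ordinaryHypergeometricCoefficient a b c (n + 1) =
      (a + n) * (b + n) * ordinaryHypergeometricCoefficient a b c n := by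
  have hpoch : (ascPochhammer 𝕂 n).eval c ≠ 0 := fun h ↦ by
    obtain ⟨k, -, hk⟩ := (ascPochhammer_eval_eq_zero_iff n c).mp h
    exact hc k hk
  have hcn : c + n ≠ 0 := fun h ↦ hc n (by linear_combination h)
  simp only [ordinaryHypergeometricCoefficient, ascPochhammer_succ_eval, Nat.factorial_succ]
  push_cast
  field_simp

theorem one_le_radius_ordinaryHypergeometricSeries {𝕂 : Type*} (𝔸 : Type*) [RCLike 𝕂]
    [NormedDivisionRing 𝔸] [NormedAlgebra 𝕂 𝔸] (a b : 𝕂) {c : 𝕂} (hc : ∀ k : ℕ, (k : 𝕂) ≠ -c) :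
    1 ≤ (ordinaryHypergeometricSeries 𝔸 a b c).radius := by
  by_cases hab : ∃ k : ℕ, (k : 𝕂) = -a ∨ (k : 𝕂) = -b
  · obtain ⟨k, hk | hk⟩ := hab
    · rw [show a = -(k : 𝕂) by rw [hk, neg_neg], ordinaryHypergeometric_radius_top_of_neg_nat₁]
      exact le_top
    · rw [show b = -(k : 𝕂) by rw [hk, neg_neg], ordinaryHypergeometric_radius_top_of_neg_nat₂]
      exact le_top
  · push Not at hab
    exact (ordinaryHypergeometricSeries_radius_eq_one 𝔸 a b c
      fun k ↦ ⟨(hab k).1, (hab k).2, hc k⟩).ge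

section Hypergeometric

variable {a b c t : ℝ}

lemma ball_one_subset_eball_radius_ordinaryHypergeometricSeries (hc : ∀ k : ℕ, (k : ℝ) ≠ -c) :
    Metric.ball (0 : ℝ) 1 ⊆ Metric.eball 0 (ordinaryHypergeometricSeries ℝ a b c).radius := by
  rw [← Metric.eball_ofReal, ENNReal.ofReal_one]
  exact Metric.eball_subset_eball (one_le_radius_ordinaryHypergeometricSeries ℝ a b hc)

lemma differentiableAt_ordinaryHypergeometric (hc : ∀ k : ℕ, (k : ℝ) ≠ -c)
    (ht : t ∈ Metric.ball 0 1) : DifferentiableAt ℝ (₂F₁ a b c : ℝ → ℝ) t :=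
  (hasDerivAt_ofScalarsSum
    (ball_one_subset_eball_radius_ordinaryHypergeometricSeries hc ht)).differentiableAt

lemma differentiableAt_deriv_ordinaryHypergeometric (hc : ∀ k : ℕ, (k : ℝ) ≠ -c)
    (ht : t ∈ Metric.ball 0 1) : DifferentiableAt ℝ (deriv (₂F₁ a b c : ℝ → ℝ)) t :=
  (hasDerivAt_deriv_ofScalarsSum
    (ball_one_subset_eball_radius_ordinaryHypergeometricSeries hc ht)).differentiableAt

theorem ordinaryHypergeometric_ode (hc : ∀ k : ℕ, (k : ℝ) ≠ -c) (ht : t ∈ Metric.ball 0 1) :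
    t * (1 - t) * deriv (deriv (₂F₁ a b c : ℝ → ℝ)) t +
      (c - (a + b + 1) * t) * deriv (₂F₁ a b c) t - a * b * ₂F₁ a b c t = 0 := by
  set p := ordinaryHypergeometricCoefficient a b c
  have ht₀ : t ∈ Metric.eball 0 (ofScalars ℝ p).radius :=
    ball_one_subset_eball_radius_ordinaryHypergeometricSeries hc ht
  have ht₁ := eball_subset_eball_derivCoeff ht₀
  change t * (1 - t) * deriv (deriv (ofScalarsSum p)) t +
    (c - (a + b + 1) * t) * deriv (ofScalarsSum p) t - a * b * ofScalarsSum p t = 0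
  rw [(hasDerivAt_deriv_ofScalarsSum ht₀).deriv, (hasDerivAt_ofScalarsSum ht₀).deriv]
  set F := ofScalarsSum p t
  set F₁ := ofScalarsSum (derivCoeff p) t
  set F₂ := ofScalarsSum (derivCoeff (derivCoeff p)) t
  have h₀ := hasSum_ofScalarsSum ht₀
  have h₁ := hasSum_ofScalarsSum ht₁
  have h₂ := hasSum_ofScalarsSum (eball_subset_eball_derivCoeff ht₁)
  have ht₁F₁ : HasSum (fun n => n * p n * t ^ n) (t * F₁) :=
    hasSum_mul_pow_of_succ (g := fun n => n * p n) (by simp) (by simpa [derivCoeff] using h₁)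
  have ht₁F₂ : HasSum (fun n => n * derivCoeff p n * t ^ n) (t * F₂) :=
    hasSum_mul_pow_of_succ (g := fun n => n * derivCoeff p n) (by simp)
      (by simpa [derivCoeff] using h₂)
  have ht₂F₂ : HasSum (fun n => (n - 1) * n * p n * t ^ n) (t * (t * F₂)) :=
    hasSum_mul_pow_of_succ (g := fun n => (n - 1) * n * p n) (by simp)
      (by simpa [derivCoeff, mul_assoc] using ht₁F₂)
  -- The equation splits as `(t F₂ + c F₁) - (t² F₂ + (a + b + 1) t F₁ + a b F)`, and both
  -- brackets are the series below, by the coefficient recurrence.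
  have hlow : HasSum (fun n => (n + c) * derivCoeff p n * t ^ n) (t * F₂ + c * F₁) := by
    convert ht₁F₂.add (h₁.mul_left c) using 1
    funext n
    ring
  have hhigh : HasSum (fun n => (n + c) * derivCoeff p n * t ^ n)
      (t * (t * F₂) + (a + b + 1) * (t * F₁) + a * b * F) := by
    convert (ht₂F₂.add (ht₁F₁.mul_left (a + b + 1))).add (h₀.mul_left (a * b)) using 1
    funext n
    simp only [derivCoeff]
    linear_combination t ^ n * ordinaryHypergeometricCoefficient_succ (a := a) (b := b) hc n
  linear_combination hlow.unique hhigh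

end Hypergeometric

lemma hyp2F1_eq_ordinaryHypergeometric (a b c : ℝ) : hyp2F1 a b c = ₂F₁ a b c := by
  ext x
  rw [hyp2F1, ordinaryHypergeometric_eq_tsum]
  congr! 2 with n
  rw [smul_eq_mul, div_eq_mul_inv, mul_inv]
  ring

open Real Set

noncomputable def legendreGauge (μ x : ℝ) : ℝ := ((1 + cos x) / (1 - cos x)) ^ (μ / 2) / √(sin x)

section LegendreGauge

variable {x : ℝ}

lemma hasDerivAt_legendreGauge (μ : ℝ) (hx : x ∈ Ioo 0 π) :
    HasDerivAt (legendreGauge μ) (legendreGauge μ x * ((-cos x - 2 * μ) / (2 * sin x))) x := by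
  have hsin : 0 < sin x := sin_pos_of_pos_of_lt_pi hx.1 hx.2
  have hcos : cos x ^ 2 < 1 := by nlinarith [sin_sq_add_cos_sq x]
  have hp : 0 < 1 + cos x := by nlinarith
  have hm : 0 < 1 - cos x := by nlinarith
  have hQ := (((hasDerivAt_cos x).const_add 1).fun_div ((hasDerivAt_cos x).const_sub 1)
    hm.ne').rpow_const (p := μ / 2) (Or.inl (div_pos hp hm).ne')
  have hS := (hasDerivAt_sin x).sqrt hsin.ne'
  refine (hQ.fun_div hS (sqrt_pos.mpr hsin).ne').congr_deriv ?_
  rw [legendreGauge, rpow_sub_one (div_pos hp hm).ne']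
  field_simp
  rw [sq_sqrt hsin.le]
  linear_combination (-2 * μ * sin x) * sin_sq_add_cos_sq x

lemma half_one_sub_cos_mem_ball (hx : x ∈ Ioo 0 π) : (1 - cos x) / 2 ∈ Metric.ball 0 1 := by
  have := sin_pos_of_pos_of_lt_pi hx.1 hx.2
  rw [Metric.mem_ball, dist_zero_right, Real.norm_eq_abs, abs_lt]
  constructor <;> nlinarith [sin_sq_add_cos_sq x]

lemma hasDerivAt_comp_half_one_sub_cos {f : ℝ → ℝ}
    (hf : DifferentiableAt ℝ f ((1 - cos x) / 2)) :
    HasDerivAt (fun y => f ((1 - cos y) / 2)) (deriv f ((1 - cos x) / 2) * (sin x / 2)) x :=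
  hf.hasDerivAt.comp x (by simpa using ((hasDerivAt_cos x).const_sub 1).div_const 2)

end LegendreGauge

section RadialEquation

variable {μ ν K χ : ℝ} {F R : ℝ → ℝ}

lemma hasDerivAt_of_eq_legendreGauge_mul
    (hF : ∀ t ∈ Metric.ball (0 : ℝ) 1, DifferentiableAt ℝ F t)
    (hR : ∀ x ∈ Ioo 0 π, R x = K * legendreGauge μ x * F ((1 - cos x) / 2)) {x : ℝ}
    (hx : x ∈ Ioo 0 π) :
    HasDerivAt R (K * legendreGauge μ x * ((-cos x - 2 * μ) / (2 * sin x) *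
      F ((1 - cos x) / 2) + sin x / 2 * deriv F ((1 - cos x) / 2))) x := by
  have hev : R =ᶠ[𝓝 x] fun y => K * legendreGauge μ y * F ((1 - cos y) / 2) :=
    eventually_of_mem (isOpen_Ioo.mem_nhds hx) hR
  refine ((((hasDerivAt_legendreGauge μ hx).const_mul K).mul
    (hasDerivAt_comp_half_one_sub_cos (hF _ (half_one_sub_cos_mem_ball hx)))).congr_of_eventuallyEq
      hev).congr_deriv ?_
  ring

theorem radial_equation_of_hypergeometric_ode
    (hF : ∀ t ∈ Metric.ball (0 : ℝ) 1, DifferentiableAt ℝ F t)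
    (hF' : ∀ t ∈ Metric.ball (0 : ℝ) 1, DifferentiableAt ℝ (deriv F) t)
    (hode : ∀ t ∈ Metric.ball (0 : ℝ) 1,
      t * (1 - t) * deriv (deriv F) t + (1 - μ - 2 * t) * deriv F t + ν * (ν + 1) * F t = 0)
    (hR : ∀ x ∈ Ioo 0 π, R x = K * legendreGauge μ x * F ((1 - cos x) / 2))
    (hχ : χ ∈ Ioo 0 π) :
    (1 / sin χ ^ 2) * deriv (fun x => sin x ^ 2 * deriv R x) χ +
      ((ν + 1 / 2) ^ 2 - 1 - (μ ^ 2 - 1 / 4) / sin χ ^ 2) * R χ = 0 := by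
  set V : ℝ → ℝ := fun x => K * legendreGauge μ x *
    (sin x * (-cos x - 2 * μ) * F ((1 - cos x) / 2) + sin x ^ 3 * deriv F ((1 - cos x) / 2)) / 2
  have hV : (fun x => sin x ^ 2 * deriv R x) =ᶠ[𝓝 χ] V := by
    filter_upwards [isOpen_Ioo.mem_nhds hχ] with x hx
    have := (sin_pos_of_pos_of_lt_pi hx.1 hx.2).ne'
    rw [(hasDerivAt_of_eq_legendreGauge_mul hF hR hx).deriv]
    field_simp
    ring
  have hu := half_one_sub_cos_mem_ball hχ
  have hV' : HasDerivAt V _ χ :=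
    (((hasDerivAt_legendreGauge μ hχ).const_mul K).mul
      ((((hasDerivAt_sin χ).mul ((hasDerivAt_cos χ).neg.sub_const (2 * μ))).mul
        (hasDerivAt_comp_half_one_sub_cos (hF _ hu))).add
      (((hasDerivAt_sin χ).pow 3).mul (hasDerivAt_comp_half_one_sub_cos (hF' _ hu))))).div_const 2
  rw [hV.deriv_eq, hV'.deriv, hR χ hχ]
  have hsin := (sin_pos_of_pos_of_lt_pi hχ.1 hχ.2).ne'
  simp only [Pi.add_apply, Pi.mul_apply, Pi.pow_apply, Pi.neg_apply]
  generalize legendreGauge μ χ = g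
  field_simp
  -- Cleared of denominators, the radial equation is `16 sin² χ` times the hypergeometric one.
  linear_combination (K * g * 16 * sin χ ^ 2) * hode _ hu +
    (K * g * (4 * sin χ ^ 2 * deriv (deriv F) ((1 - cos χ) / 2) - 4 * F ((1 - cos χ) / 2))) *
      sin_sq_add_cos_sq χ

theorem radial_equation_legendreP (hμ : ∀ k : ℕ, (k : ℝ) ≠ μ - 1)
    (hR : ∀ x ∈ Ioo 0 π, R x = K / √(sin x) * legendreP μ ν (cos x)) (hχ : χ ∈ Ioo 0 π) :
    (1 / sin χ ^ 2) * deriv (fun x => sin x ^ 2 * deriv R x) χ +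
      ((ν + 1 / 2) ^ 2 - 1 - (μ ^ 2 - 1 / 4) / sin χ ^ 2) * R χ = 0 := by
  have hc : ∀ k : ℕ, (k : ℝ) ≠ -(1 - μ) := fun k ↦ by rw [neg_sub]; exact hμ k
  refine radial_equation_of_hypergeometric_ode (F := ₂F₁ (-ν) (ν + 1) (1 - μ))
    (K := K / Gamma (1 - μ)) (fun t ht ↦ differentiableAt_ordinaryHypergeometric hc ht)
    (fun t ht ↦ differentiableAt_deriv_ordinaryHypergeometric hc ht)
    (fun t ht ↦ by linear_combination ordinaryHypergeometric_ode hc ht) (fun x hx ↦ ?_) hχ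
  rw [hR x hx, legendreP, hyp2F1_eq_ordinaryHypergeometric, legendreGauge]
  ring

end RadialEquation

lemma Rclosed_eq_div_sqrt_sin_mul_legendreP (ω ℓ : ℕ) {x : ℝ} (hx : x ∈ Ioo 0 π) :
    Rclosed ω ℓ x = √(π * Mcoef ω ℓ / (2 * ((ω : ℝ) + 1) ^ 2)) / √(sin x) *
      legendreP (-(1 / 2) - ℓ) (1 / 2 + ω) (cos x) := by
  rw [Rclosed, ← div_div, sqrt_div' _ (sin_pos_of_pos_of_lt_pi hx.1 hx.2).le]

theorem radial_closed_general (ω ℓ : ℕ) (χ : ℝ) (hχ : χ ∈ Set.Ioo 0 π) :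
    (1 / Real.sin χ ^ 2) *
        deriv (fun x => Real.sin x ^ 2 * deriv (Rclosed ω ℓ) x) χ +
      (((ω : ℝ) + 1) ^ 2 - 1 - (ℓ * (ℓ + 1) : ℝ) / Real.sin χ ^ 2) * Rclosed ω ℓ χ = 0 := by
  have hμ : ∀ k : ℕ, (k : ℝ) ≠ -(1 / 2) - ℓ - 1 := fun k h ↦ by
    linarith [Nat.cast_nonneg (α := ℝ) ℓ, Nat.cast_nonneg (α := ℝ) k]
  convert radial_equation_legendreP hμ
    (fun x hx ↦ Rclosed_eq_div_sqrt_sin_mul_legendreP ω ℓ hx) hχ using 3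
  ring

/-- For the closed model `K = 1`, `R_{ωℓ}` solves the radial equation
`(1/sin²χ)(sin²χ R')' + ((ω+1)² − 1 − ℓ(ℓ+1)/sin²χ) R = 0` on `(0, π)`. -/
theorem radial_closed (ω ℓ : ℕ) (hℓω : ℓ ≤ ω) (χ : ℝ) (hχ : χ ∈ Set.Ioo 0 π) :
    (1 / Real.sin χ ^ 2) *
        deriv (fun x => Real.sin x ^ 2 * deriv (Rclosed ω ℓ) x) χ +
      (((ω : ℝ) + 1) ^ 2 - 1 - (ℓ * (ℓ + 1) : ℝ) / Real.sin χ ^ 2) * Rclosed ω ℓ χ = 0 :=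
  radial_closed_general ω ℓ χ hχ
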